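/- For all integers a₁, a₂, a₃, a₄ ≥ 2, one has a₁·W₁ − W₄ = a₃·W₃ − W₂ = a₁a₂a₃a₄ − a₁a₂a₃ − a₁a₃a₄ + a₁a₄ + a₂a₃ − a₁ − a₃ + 1, and this common value equals the Hirzebruch–Jung numerator |[2*(a₃−1), a₂, a₄, 2*(a₁−1)]|. -/

import Mathlib

/-!
A run of `k` twos acts on the Hirzebruch–Jung recursion as an arithmetic progression:
`|[2*k, x, …]| = (k + 1)·|[x, …]| − k·|[…]|`, and in particular `|[2*k]| = k + 1`,
`|[x, 2*k]| = (k + 1)·x − k`. Removing the run `2*(a₃−1)` on the left this way, the numerator of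
`[2*(a₃−1), a₂, a₄, 2*(a₁−1)]` is an explicit polynomial in the `aᵢ`; that `a₁W₁ − W₄` and
`a₃W₃ − W₂` equal the same polynomial is a plain polynomial identity.
-/

/-- Hirzebruch–Jung numerator: |[]| = 1, |[n]| = n,
|[n₁, n₂, …]| = n₁·|[n₂, …]| − |[n₃, …]|. -/
def hj : List ℤ → ℤ
  | [] => 1
  | [n] => n
  | n :: m :: l => n * hj (m :: l) - hj l

theorem hj_replicate_two_append (x : ℤ) (l : List ℤ) :
    ∀ k : ℕ, hj (List.replicate k 2 ++ x :: l) = (k + 1) * hj (x :: l) - k * hj l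
  | 0 => by simp
  | 1 => by simp [hj]
  | k + 2 => by
    rw [List.replicate_succ, List.replicate_succ, List.cons_append, List.cons_append, hj,
      ← List.cons_append, ← List.replicate_succ, hj_replicate_two_append x l (k + 1),
      hj_replicate_two_append x l k]
    push_cast
    ring

theorem hj_replicate_two (k : ℕ) : hj (List.replicate k 2) = k + 1 := by
  cases k with
  | zero => rfl
  | succ k =>
    rw [List.replicate_succ', hj_replicate_two_append, hj, hj]
    push_cast
    ring

theorem hj_cons_replicate_two (x : ℤ) (m : ℕ) :
    hj (x :: List.replicate m 2) = x * (m + 1) - m := by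
  cases m with
  | zero => simp [hj]
  | succ m =>
    rw [List.replicate_succ, hj, ← List.replicate_succ, hj_replicate_two, hj_replicate_two]
    push_cast
    ring

theorem s_two_eq_hj_general (a₁ a₂ a₃ a₄ : ℤ) (h₁ : 2 ≤ a₁) (h₃ : 2 ≤ a₃) :
    a₁ * (a₂ * a₃ * a₄ - a₃ * a₄ + a₄ - 1) - (a₁ * a₂ * a₃ - a₂ * a₃ + a₃ - 1) =
        a₁ * a₂ * a₃ * a₄ - a₁ * a₂ * a₃ - a₁ * a₃ * a₄ + a₁ * a₄ + a₂ * a₃ - a₁ - a₃ + 1 ∧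
    a₃ * (a₁ * a₂ * a₄ - a₁ * a₂ + a₂ - 1) - (a₁ * a₃ * a₄ - a₁ * a₄ + a₁ - 1) =
        a₁ * a₂ * a₃ * a₄ - a₁ * a₂ * a₃ - a₁ * a₃ * a₄ + a₁ * a₄ + a₂ * a₃ - a₁ - a₃ + 1 ∧
    hj (List.replicate (a₃ - 1).toNat 2 ++ [a₂, a₄] ++ List.replicate (a₁ - 1).toNat 2) =
        a₁ * a₂ * a₃ * a₄ - a₁ * a₂ * a₃ - a₁ * a₃ * a₄ + a₁ * a₄ + a₂ * a₃ - a₁ - a₃ + 1 := by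
  refine ⟨by ring, by ring, ?_⟩
  have ha₃ : ((a₃ - 1).toNat : ℤ) = a₃ - 1 := Int.toNat_of_nonneg (by omega)
  have ha₁ : ((a₁ - 1).toNat : ℤ) = a₁ - 1 := Int.toNat_of_nonneg (by omega)
  rw [List.append_assoc, List.cons_append, List.cons_append, List.nil_append,
    hj_replicate_two_append, hj, hj_cons_replicate_two, hj_replicate_two, ha₃, ha₁]
  ring

theorem s_two_eq_hj (a₁ a₂ a₃ a₄ : ℤ) (h₁ : 2 ≤ a₁) (h₂ : 2 ≤ a₂) (h₃ : 2 ≤ a₃) (h₄ : 2 ≤ a₄) :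
    a₁ * (a₂ * a₃ * a₄ - a₃ * a₄ + a₄ - 1) - (a₁ * a₂ * a₃ - a₂ * a₃ + a₃ - 1) =
        a₁ * a₂ * a₃ * a₄ - a₁ * a₂ * a₃ - a₁ * a₃ * a₄ + a₁ * a₄ + a₂ * a₃ - a₁ - a₃ + 1 ∧
    a₃ * (a₁ * a₂ * a₄ - a₁ * a₂ + a₂ - 1) - (a₁ * a₃ * a₄ - a₁ * a₄ + a₁ - 1) =
        a₁ * a₂ * a₃ * a₄ - a₁ * a₂ * a₃ - a₁ * a₃ * a₄ + a₁ * a₄ + a₂ * a₃ - a₁ - a₃ + 1 ∧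
    hj (List.replicate (a₃ - 1).toNat 2 ++ [a₂, a₄] ++ List.replicate (a₁ - 1).toNat 2) =
        a₁ * a₂ * a₃ * a₄ - a₁ * a₂ * a₃ - a₁ * a₃ * a₄ + a₁ * a₄ + a₂ * a₃ - a₁ - a₃ + 1 :=
  s_two_eq_hj_general a₁ a₂ a₃ a₄ h₁ h₃
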